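/- arXiv:2604.17469 — 2 statements merged into one kernel-verified Lean document; each statement's English description precedes it below -/
import Mathlib

section
/- Strong law of large numbers for order statistics with shifts: if h(x_1,...,x_k) = x_1^{p_1}···x_k^{p_k} is a monomial and φ: [0,1] → ℝ is differentiable with bounded derivative, then (1/N)·Σ_{i=0}^{N-k} Θ_{i+1,N}^{p_1}···Θ_{i+k,N}^{p_k} φ(i/N) → ∫_0^1 ρ(x)^{p_1+···+p_k} φ(x) dx almost surely, where ρ(x) = θ_L + (θ_R-θ_L)x. -/
/-!
By the strong law of large numbers applied to the indicators `1{U_j ≤ t}`, almost surely the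
empirical distribution function of `U_1, …, U_N` converges to `t` at every grid point `t = r/m`.
Since the `i`-th order statistic is `≤ t` exactly when at least `i` of the sample are `≤ t`, this
forces `max_i |U_{i:N} - i/N| → 0`. Hence the shifted arguments `U_{i+j+1:N}`, `j < k`, are all
within `o(1)` of `i/N`, and by uniform continuity of the integrand on `[0,1]` the sum differs by
`o(1)` from the Riemann sum `(1/N) Σ_i ρ(i/N)^{Σ p} φ(i/N)`, which converges to the integral.
-/

open MeasureTheory ProbabilityTheory Finset Filter Topology

theorem abs_riemannSum_sub_integral_le {g : ℝ → ℝ} (hg : Continuous g) {h ε : ℝ} (hh : 0 ≤ h)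
    (n : ℕ)
    (hgε : ∀ x ∈ Set.Icc 0 (n * h), ∀ y ∈ Set.Icc 0 (n * h), |x - y| ≤ h → |g x - g y| ≤ ε) :
    |h * ∑ i ∈ range n, g (i * h) - ∫ x in 0..n * h, g x| ≤ n * h * ε := by
  have hsplit : ∫ x in 0..n * h, g x = ∑ i ∈ range n, ∫ x in i * h..(i + 1 : ℕ) * h, g x := by
    rw [intervalIntegral.sum_integral_adjacent_intervals fun i _ => hg.intervalIntegrable _ _]
    simp
  have hterm : ∀ i ∈ range n,
      |h * g (i * h) - ∫ x in i * h..(i + 1 : ℕ) * h, g x| ≤ h * ε := by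
    intro i hi
    have hi : (i + 1 : ℝ) ≤ n := by exact_mod_cast mem_range.1 hi
    have hstep : ((i + 1 : ℕ) : ℝ) * h - i * h = h := by push_cast; ring
    have hconst : h * g (i * h) = ∫ _ in i * h..(i + 1 : ℕ) * h, g (i * h) := by
      rw [intervalIntegral.integral_const, hstep, smul_eq_mul]
    rw [hconst, ← intervalIntegral.integral_sub intervalIntegrable_const
      (hg.intervalIntegrable _ _)]
    refine (intervalIntegral.norm_integral_le_of_norm_le_const (C := ε)
      (f := fun x => g (i * h) - g x) fun x hx => ?_).trans_eq
      (by rw [hstep, abs_of_nonneg hh, mul_comm])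
    rw [Set.uIoc_of_le (by rw [← sub_nonneg, hstep]; exact hh)] at hx
    push_cast at hx
    refine hgε _ ⟨by positivity, by nlinarith⟩ _ ⟨by nlinarith [hx.1], by nlinarith [hx.2]⟩ ?_
    rw [abs_le]; constructor <;> nlinarith [hx.1, hx.2]
  calc |h * ∑ i ∈ range n, g (i * h) - ∫ x in 0..n * h, g x|
      = |∑ i ∈ range n, (h * g (i * h) - ∫ x in i * h..(i + 1 : ℕ) * h, g x)| := by
        rw [hsplit, sum_sub_distrib, mul_sum]
    _ ≤ ∑ _i ∈ range n, h * ε := (abs_sum_le_sum_abs _ _).trans (sum_le_sum hterm)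
    _ = n * h * ε := by rw [sum_const, card_range, nsmul_eq_mul, mul_assoc]

theorem tendsto_riemannSum {g : ℝ → ℝ} (hg : Continuous g) {n : ℕ → ℕ}
    (hn : Tendsto (fun N : ℕ => (n N : ℝ) / N) atTop (𝓝 1)) :
    Tendsto (fun N : ℕ => 1 / (N : ℝ) * ∑ i ∈ range (n N), g (i / N)) atTop
      (𝓝 (∫ x in 0..1, g x)) := by
  have hprim : Tendsto (fun N : ℕ => ∫ x in 0..(n N : ℝ) / N, g x) atTop (𝓝 (∫ x in 0..1, g x)) :=
    ((intervalIntegral.continuous_primitive (fun _ _ => hg.intervalIntegrable _ _) 0).tendsto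
      1).comp hn
  suffices herr : Tendsto (fun N : ℕ => 1 / (N : ℝ) * ∑ i ∈ range (n N), g (i / N)
      - ∫ x in 0..(n N : ℝ) / N, g x) atTop (𝓝 0) by
    simpa using herr.add hprim
  rw [Metric.tendsto_atTop]
  intro ε hε
  obtain ⟨δ, hδ, hgδ⟩ := Metric.uniformContinuousOn_iff_le.1
    ((isCompact_Icc (a := (0 : ℝ)) (b := 2)).uniformContinuousOn_of_continuous hg.continuousOn)
    (ε / 3) (by positivity)
  obtain ⟨N₀, hN₀⟩ := eventually_atTop.1 ((hn.eventually (gt_mem_nhds one_lt_two)).and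
    ((tendsto_const_div_atTop_nhds_zero_nat 1).eventually (gt_mem_nhds hδ)))
  refine ⟨max N₀ 1, fun N hN => ?_⟩
  obtain ⟨hn2, hNδ⟩ := hN₀ N (le_of_max_le_left hN)
  have hN : (0 : ℝ) < N := by exact_mod_cast le_of_max_le_right hN
  have key := abs_riemannSum_sub_integral_le hg (h := 1 / N) (ε := ε / 3) (by positivity) (n N)
    fun x hx y hy hxy => by
      rw [mul_one_div] at hx hy
      exact hgδ x ⟨hx.1, hx.2.trans hn2.le⟩ y ⟨hy.1, hy.2.trans hn2.le⟩
        (by rw [Real.dist_eq]; linarith)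
  simp only [mul_one_div] at key
  rw [Real.dist_eq, sub_zero]
  calc _ ≤ (n N : ℝ) / N * (ε / 3) := key
    _ ≤ 2 * (ε / 3) := by gcongr
    _ < ε := by linarith

theorem tendsto_natCast_sub_add_one_div (k : ℕ) :
    Tendsto (fun N : ℕ => ((N - k + 1 : ℕ) : ℝ) / N) atTop (𝓝 1) := by
  have h : Tendsto (fun N : ℕ => 1 + (1 - k : ℝ) / N) atTop (𝓝 1) := by
    simpa using (tendsto_const_div_atTop_nhds_zero_nat (1 - k : ℝ)).const_add 1
  refine h.congr' ?_
  filter_upwards [eventually_ge_atTop (max k 1)] with N hN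
  have hN0 : (N : ℝ) ≠ 0 := by
    have : 1 ≤ N := le_of_max_le_right hN
    positivity
  rw [Nat.cast_add, Nat.cast_sub (le_of_max_le_left hN)]
  field_simp
  ring

theorem tendsto_average_of_abs_sub_le {a b : ℕ → ℕ → ℝ} {n : ℕ → ℕ} {L : ℝ}
    (hn : ∀ N, n N ≤ N + 1) (hab : ∀ ε > 0, ∀ᶠ N in atTop, ∀ i < n N, |a N i - b N i| ≤ ε)
    (hb : Tendsto (fun N : ℕ => 1 / (N : ℝ) * ∑ i ∈ range (n N), b N i) atTop (𝓝 L)) :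
    Tendsto (fun N : ℕ => 1 / (N : ℝ) * ∑ i ∈ range (n N), a N i) atTop (𝓝 L) := by
  suffices hdiff : Tendsto (fun N : ℕ => 1 / (N : ℝ) * ∑ i ∈ range (n N), (a N i - b N i))
      atTop (𝓝 0) by
    simpa [sum_sub_distrib, mul_sub] using hdiff.add hb
  rw [Metric.tendsto_nhds]
  intro ε hε
  filter_upwards [hab (ε / 3) (by positivity), eventually_ge_atTop 1] with N hN hN1
  have hNpos : (0 : ℝ) < N := by exact_mod_cast hN1
  have hcard : (n N : ℝ) ≤ 2 * N := by
    have : n N ≤ 2 * N := by linarith [hn N]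
    exact_mod_cast this
  rw [Real.dist_eq, sub_zero, abs_mul, abs_of_pos (by positivity)]
  calc 1 / (N : ℝ) * |∑ i ∈ range (n N), (a N i - b N i)|
      ≤ 1 / N * ∑ _i ∈ range (n N), ε / 3 := by
        gcongr
        exact (abs_sum_le_sum_abs _ _).trans (sum_le_sum fun i hi => hN i (mem_range.1 hi))
    _ = n N / N * (ε / 3) := by rw [sum_const, card_range, nsmul_eq_mul]; ring
    _ ≤ 2 * (ε / 3) := by gcongr; rwa [div_le_iff₀ hNpos]
    _ < ε := by linarith

theorem exists_pos_abs_prod_sub_prod_le {f : ℕ → ℝ → ℝ} (hf : ∀ j, Continuous (f j)) (k : ℕ)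
    {ε : ℝ} (hε : 0 < ε) :
    ∃ δ > 0, ∀ x y : ℕ → ℝ, (∀ j < k, x j ∈ Set.Icc 0 1 ∧ y j ∈ Set.Icc 0 1 ∧ |x j - y j| ≤ δ) →
      |∏ j ∈ range k, f j (x j) - ∏ j ∈ range k, f j (y j)| ≤ ε := by
  let F : (Fin k → ℝ) → ℝ := fun z => ∏ j : Fin k, f j (z j)
  have hF : Continuous F := continuous_finsetProd _ fun j _ => (hf j).comp (continuous_apply j)
  obtain ⟨δ, hδ, hFδ⟩ := Metric.uniformContinuousOn_iff_le.1
    ((isCompact_Icc (a := (0 : Fin k → ℝ)) (b := 1)).uniformContinuousOn_of_continuous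
      hF.continuousOn) ε hε
  refine ⟨δ, hδ, fun x y hxy => ?_⟩
  have hmem : ∀ z : ℕ → ℝ, (∀ j < k, z j ∈ Set.Icc 0 1) → (fun j : Fin k => z j) ∈ Set.Icc 0 1 :=
    fun z hz => ⟨fun j => (hz j j.2).1, fun j => (hz j j.2).2⟩
  rw [prod_range fun j => f j (x j), prod_range fun j => f j (y j)]
  exact hFδ _ (hmem x fun j hj => (hxy j hj).1) _ (hmem y fun j hj => (hxy j hj).2.1)
    ((dist_pi_le_iff hδ.le).2 fun j => (hxy j j.2).2.2)

theorem abs_sub_div_le_add_of_lt {x η : ℝ} {N i j k : ℕ} (hN : (0 : ℝ) < N) (hj : j < k)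
    (hx : |x - (i + j + 1 : ℕ) / N| ≤ η) : |x - i / N| ≤ η + k / N := by
  have hgap : |((i + j + 1 : ℕ) : ℝ) / N - i / N| ≤ k / N := by
    rw [← sub_div, abs_div, abs_of_pos hN]
    gcongr
    rw [show ((i + j + 1 : ℕ) : ℝ) - i = j + 1 by push_cast; ring, abs_of_nonneg (by positivity)]
    exact_mod_cast hj
  exact (abs_sub_le _ _ _).trans (add_le_add hx hgap)

theorem tendsto_average_prod_shift_mul {f : ℕ → ℝ → ℝ} (hf : ∀ j, Continuous (f j)) {φ : ℝ → ℝ}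
    (hφ : Continuous φ) (k : ℕ) {V : ℕ → ℕ → ℝ}
    (hV : ∀ N i, 1 ≤ i → i ≤ N → V N i ∈ Set.Icc 0 1)
    (hclose : ∀ ε > 0, ∀ᶠ N in atTop, ∀ i, 1 ≤ i → i ≤ N → |V N i - i / N| ≤ ε) :
    Tendsto (fun N : ℕ => 1 / (N : ℝ) * ∑ i ∈ range (N - k + 1),
        (∏ j ∈ range k, f j (V N (i + j + 1))) * φ (i / N))
      atTop (𝓝 (∫ x in 0..1, (∏ j ∈ range k, f j x) * φ x)) := by
  refine tendsto_average_of_abs_sub_le (fun N => by omega) ?_ (tendsto_riemannSum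
    ((continuous_finsetProd _ fun j _ => hf j).mul hφ) (tendsto_natCast_sub_add_one_div k))
  intro ε hε
  obtain ⟨C, hC⟩ := (isCompact_Icc (a := (0 : ℝ)) (b := 1)).exists_bound_of_continuousOn
    hφ.continuousOn
  obtain ⟨δ, hδ, hprod⟩ := exists_pos_abs_prod_sub_prod_le hf k
    (ε := ε / (|C| + 1)) (by positivity)
  filter_upwards [hclose (δ / 2) (by positivity), eventually_ge_atTop (max k 1),
    (tendsto_const_div_atTop_nhds_zero_nat (k : ℝ)).eventually (ge_mem_nhds (half_pos hδ))]
    with N hN hNk hkN i hi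
  have hNpos : (0 : ℝ) < N := by exact_mod_cast (le_of_max_le_right hNk)
  have hiN : (i : ℝ) / N ∈ Set.Icc 0 1 :=
    ⟨by positivity, (div_le_one hNpos).2 (by exact_mod_cast (by omega : i ≤ N))⟩
  have hφi : |φ (i / N)| ≤ |C| + 1 := by
    have := hC _ hiN; rw [Real.norm_eq_abs] at this; linarith [le_abs_self C]
  have hshift : ∀ j < k, V N (i + j + 1) ∈ Set.Icc 0 1 ∧ (i : ℝ) / N ∈ Set.Icc 0 1 ∧
      |V N (i + j + 1) - i / N| ≤ δ := fun j hj =>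
    ⟨hV N _ (by omega) (by omega), hiN, (abs_sub_div_le_add_of_lt hNpos hj
      (hN _ (by omega) (by omega))).trans (by linarith)⟩
  rw [Pi.mul_apply, ← sub_mul, abs_mul]
  calc _ ≤ ε / (|C| + 1) * (|C| + 1) :=
        mul_le_mul (hprod (fun j => V N (i + j + 1)) (fun _ => i / N) hshift) hφi
          (abs_nonneg _) (by positivity)
    _ = ε := by field_simp

noncomputable def empiricalCDF (u : ℕ → ℝ) (N : ℕ) (t : ℝ) : ℝ := #{j ∈ Icc 1 N | u j ≤ t} / N

theorem card_filter_comp_eq_of_bijOn {α β : Type*} {s : Finset α} {σ : α → α}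
    (hσ : Set.BijOn σ s s) {u v : α → β} (hv : ∀ i ∈ s, v i = u (σ i)) (P : β → Prop)
    [DecidablePred P] : #{j ∈ s | P (v j)} = #{j ∈ s | P (u j)} := by
  refine card_nbij σ (fun j hj => ?_) (hσ.injOn.mono fun j hj => ?_) (fun j hj => ?_)
  · rw [mem_coe, mem_filter] at hj
    exact mem_filter.2 ⟨hσ.mapsTo hj.1, hv j hj.1 ▸ hj.2⟩
  · exact (mem_filter.1 hj).1
  · obtain ⟨hjs, hPj⟩ := mem_filter.1 hj
    obtain ⟨i, his, rfl⟩ := hσ.surjOn hjs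
    exact ⟨i, mem_filter.2 ⟨his, (hv i his).symm ▸ hPj⟩, rfl⟩

theorem le_iff_le_card_filter_le {v : ℕ → ℝ} {N i : ℕ} (hi : 1 ≤ i) (hiN : i ≤ N)
    (hmono : ∀ ⦃a b⦄, 1 ≤ a → a ≤ b → b ≤ N → v a ≤ v b) (t : ℝ) :
    v i ≤ t ↔ i ≤ #{j ∈ Icc 1 N | v j ≤ t} := by
  constructor
  · intro h
    have hsub : Icc 1 i ⊆ {j ∈ Icc 1 N | v j ≤ t} := fun j hj => by
      rw [mem_Icc] at hj
      exact mem_filter.2 ⟨mem_Icc.2 ⟨hj.1, hj.2.trans hiN⟩, (hmono hj.1 hj.2 hiN).trans h⟩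
    simpa using card_le_card hsub
  · intro h
    by_contra! hlt
    have hsub : {j ∈ Icc 1 N | v j ≤ t} ⊆ Icc 1 (i - 1) := fun j hj => by
      obtain ⟨hj, hvj⟩ := mem_filter.1 hj
      rw [mem_Icc] at hj ⊢
      refine ⟨hj.1, Nat.le_sub_one_of_lt (lt_of_not_ge fun hij => ?_)⟩
      exact (hlt.trans_le (hmono hi hij hj.2)).not_ge hvj
    have := card_le_card hsub
    simp only [Nat.card_Icc] at this
    omega

theorem le_iff_div_le_empiricalCDF {v : ℕ → ℝ} {N i : ℕ} (hi : 1 ≤ i) (hiN : i ≤ N)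
    (hmono : ∀ ⦃a b⦄, 1 ≤ a → a ≤ b → b ≤ N → v a ≤ v b) (t : ℝ) :
    v i ≤ t ↔ (i : ℝ) / N ≤ empiricalCDF v N t := by
  have hN : (0 : ℝ) < N := by exact_mod_cast (hi.trans hiN)
  rw [le_iff_le_card_filter_le hi hiN hmono, empiricalCDF, div_le_div_iff_of_pos_right hN,
    Nat.cast_le]

theorem abs_sub_div_le_of_abs_empiricalCDF_sub_le {v : ℕ → ℝ} {N m : ℕ} {η : ℝ}
    (hmono : ∀ ⦃a b⦄, 1 ≤ a → a ≤ b → b ≤ N → v a ≤ v b)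
    (hv : ∀ i, 1 ≤ i → i ≤ N → v i ∈ Set.Icc 0 1) (hm : 0 < m)
    (hF : ∀ r ≤ m, |empiricalCDF v N (r / m) - r / m| ≤ η) {i : ℕ} (hi : 1 ≤ i) (hiN : i ≤ N) :
    |v i - i / N| ≤ 1 / m + η := by
  have hmpos : (0 : ℝ) < m := by exact_mod_cast hm
  obtain ⟨hv0, hv1⟩ := hv i hi hiN
  -- `r = ⌈m v i⌉` brackets `v i` between the grid points `(r - 1) / m < v i ≤ r / m`.
  set r := ⌈m * v i⌉₊
  have hrm : r ≤ m := Nat.ceil_le.2 (by simpa using mul_le_mul_of_nonneg_left hv1 hmpos.le)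
  have hvr : v i ≤ r / m := by
    rw [le_div_iff₀ hmpos, mul_comm]; exact Nat.le_ceil _
  have hrv : (r : ℝ) / m < v i + 1 / m := by
    rw [div_lt_iff₀ hmpos, add_mul, one_div_mul_cancel hmpos.ne', mul_comm]
    exact Nat.ceil_lt_add_one (by positivity)
  have hupper : (i : ℝ) / N - v i ≤ 1 / m + η := by
    have h1 := (le_iff_div_le_empiricalCDF hi hiN hmono _).1 hvr
    have h2 := (abs_le.1 (hF r hrm)).2
    linarith
  have hlower : v i - i / N ≤ 1 / m + η := by
    rcases Nat.eq_zero_or_eq_succ_pred r with h0 | hsucc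
    · have : v i ≤ 0 := by simpa [h0] using hvr
      have : (0 : ℝ) ≤ i / N := by positivity
      have : (0 : ℝ) ≤ 1 / m := by positivity
      have := (abs_nonneg _).trans (hF 0 (Nat.zero_le _))
      linarith
    · set s := r.pred
      have hsv : (s : ℝ) / m < v i := by
        rw [div_lt_iff₀ hmpos, mul_comm]
        exact Nat.lt_ceil.1 (show s < r by omega)
      have h1 := lt_of_not_ge fun h => hsv.not_ge ((le_iff_div_le_empiricalCDF hi hiN hmono _).2 h)
      have h2 := (abs_le.1 (hF s (by omega))).1
      have h3 : (r : ℝ) / m = s / m + 1 / m := by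
        rw [hsucc, ← add_div]; push_cast; ring_nf
      linarith
  rw [abs_le]
  constructor <;> linarith

theorem eventually_abs_orderStat_sub_div_le {u : ℕ → ℝ} {V : ℕ → ℕ → ℝ}
    (hmono : ∀ N ⦃i j⦄, 1 ≤ i → i ≤ j → j ≤ N → V N i ≤ V N j)
    (hV : ∀ N i, 1 ≤ i → i ≤ N → V N i ∈ Set.Icc 0 1)
    (hperm : ∀ N, ∃ σ : ℕ → ℕ, Set.BijOn σ (Set.Icc 1 N) (Set.Icc 1 N) ∧
      ∀ i ∈ Set.Icc 1 N, V N i = u (σ i))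
    (hF : ∀ m r : ℕ, r ≤ m → Tendsto (fun N => empiricalCDF u N (r / m)) atTop (𝓝 (r / m)))
    {ε : ℝ} (hε : 0 < ε) :
    ∀ᶠ N in atTop, ∀ i, 1 ≤ i → i ≤ N → |V N i - i / N| ≤ ε := by
  obtain ⟨m, hm⟩ := exists_nat_one_div_lt (half_pos hε)
  have hgrid : ∀ᶠ N in atTop, ∀ r ∈ range (m + 2),
      |empiricalCDF u N (r / (m + 1 : ℕ)) - r / (m + 1 : ℕ)| ≤ ε / 2 := by
    refine (eventually_all_finset _).2 fun r hr => ?_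
    have := (hF (m + 1) r (by simpa [Nat.lt_succ_iff] using hr)).eventually
      (Metric.closedBall_mem_nhds _ (half_pos hε))
    simpa only [Metric.mem_closedBall, Real.dist_eq] using this
  filter_upwards [hgrid] with N hN i hi hiN
  obtain ⟨σ, hσ, hVσ⟩ := hperm N
  have hcdf : ∀ t, empiricalCDF (V N) N t = empiricalCDF u N t := fun t => by
    rw [empiricalCDF, empiricalCDF, card_filter_comp_eq_of_bijOn (by rwa [coe_Icc]) 
      (by simpa using hVσ) (· ≤ t)]
  have := abs_sub_div_le_of_abs_empiricalCDF_sub_le (hmono N) (hV N) (Nat.succ_pos m)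
    (fun r hr => by rw [hcdf]; exact hN r (mem_range.2 (by omega))) hi hiN
  push_cast at this hm
  linarith

theorem sum_range_indicator_Iic_eq_card (u : ℕ → ℝ) (N : ℕ) (t : ℝ) :
    ∑ i ∈ range N, (Set.Iic t).indicator 1 (u (i + 1)) = (#{j ∈ Icc 1 N | u j ≤ t} : ℝ) := by
  rw [card_filter, Nat.cast_sum, range_eq_Ico, ← Ico_add_one_right_eq_Icc,
    ← sum_Ico_add' _ 0 N 1]
  simp [Set.indicator_apply]

section Sample

variable {Ω : Type*} [MeasurableSpace Ω] {μ : Measure Ω}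

theorem ae_tendsto_empiricalCDF [IsFiniteMeasure μ] {U : ℕ → Ω → ℝ} (hU : Measurable (U 1))
    (hindep : Pairwise fun i j => IndepFun (U i) (U j) μ)
    (hident : ∀ i, IdentDistrib (U i) (U 1) μ μ) (t : ℝ) :
    ∀ᵐ ω ∂μ, Tendsto (fun N => empiricalCDF (U · ω) N t) atTop
      (𝓝 (μ.real (U 1 ⁻¹' Set.Iic t))) := by
  have hind : Measurable ((Set.Iic t).indicator (1 : ℝ → ℝ)) :=
    measurable_const.indicator measurableSet_Iic
  let X : ℕ → Ω → ℝ := fun i => (Set.Iic t).indicator 1 ∘ U (i + 1)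
  have hmean : μ[X 0] = μ.real (U 1 ⁻¹' Set.Iic t) := by
    simp only [X, zero_add]
    exact integral_indicator_one (hU measurableSet_Iic)
  have hint : Integrable (X 0) μ := by
    simp only [X, zero_add]
    exact (integrable_const 1).indicator (hU measurableSet_Iic)
  have hlaw := strong_law_ae_real X hint
    (fun i j hij => (hindep (by simpa using hij)).comp hind hind)
    (fun i => ((hident (i + 1)).trans (hident 1).symm).comp hind)
  filter_upwards [hlaw] with ω hω
  rw [← hmean]
  refine hω.congr fun N => ?_
  rw [empiricalCDF, ← sum_range_indicator_Iic_eq_card]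
  rfl

theorem measureReal_preimage_Iic_of_map_eq {X : Ω → ℝ} (hX : Measurable X)
    (hlaw : μ.map X = volume.restrict (Set.Icc 0 1)) {t : ℝ} (ht0 : 0 ≤ t) (ht1 : t ≤ 1) :
    μ.real (X ⁻¹' Set.Iic t) = t := by
  rw [measureReal_def, ← Measure.map_apply hX measurableSet_Iic, hlaw,
    Measure.restrict_apply measurableSet_Iic, Set.inter_comm, ← Set.Ici_inter_Iic, Set.inter_assoc,
    Set.Iic_inter_Iic, Set.Ici_inter_Iic, min_eq_right ht1, Real.volume_Icc,
    sub_zero, ENNReal.toReal_ofReal ht0]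

theorem ae_mem_Icc_of_map_eq {X : Ω → ℝ} (hX : AEMeasurable X μ)
    (hlaw : μ.map X = volume.restrict (Set.Icc 0 1)) :
    ∀ᵐ ω ∂μ, X ω ∈ Set.Icc 0 1 :=
  ae_of_ae_map hX (hlaw ▸ ae_restrict_mem measurableSet_Icc)

end Sample

theorem slln_local_monomials_order_statistics_general
    {Ω : Type*} [MeasureSpace Ω] [IsProbabilityMeasure (ℙ : Measure Ω)]
    (θL θR : ℝ)
    (U : ℕ → Ω → ℝ)
    (hUmeas : ∀ i, Measurable (U i))
    (hUiid : iIndepFun U ℙ)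
    (hUlaw : ∀ i, Measure.map (U i) ℙ = volume.restrict (Set.Icc (0:ℝ) 1))
    (Uord : ℕ → ℕ → Ω → ℝ)
    (hmono : ∀ N ω ⦃i j : ℕ⦄, 1 ≤ i → i ≤ j → j ≤ N → Uord N i ω ≤ Uord N j ω)
    (hperm : ∀ N ω, ∃ σ : ℕ → ℕ, Set.BijOn σ (Set.Icc 1 N) (Set.Icc 1 N) ∧
      ∀ i ∈ Set.Icc 1 N, Uord N i ω = U (σ i) ω)
    (k : ℕ) (p : ℕ → ℕ)
    (φ : ℝ → ℝ) (hφ : Differentiable ℝ φ) :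
    ∀ᵐ ω ∂ℙ, Tendsto
      (fun N : ℕ =>
        (1 / (N : ℝ)) * ∑ i ∈ Finset.range (N - k + 1),
          (∏ j ∈ Finset.range k, (θL + (θR - θL) * Uord N (i + j + 1) ω) ^ (p j)) *
            φ ((i : ℝ) / N))
      atTop
      (nhds (∫ x in (0:ℝ)..1,
        (θL + (θR - θL) * x) ^ (∑ j ∈ Finset.range k, p j) * φ x)) := by
  have hident : ∀ i, IdentDistrib (U i) (U 1) ℙ ℙ := fun i =>
    ⟨(hUmeas i).aemeasurable, (hUmeas 1).aemeasurable, by rw [hUlaw, hUlaw]⟩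
  have hunit : ∀ᵐ ω ∂ℙ, ∀ j, U j ω ∈ Set.Icc 0 1 :=
    ae_all_iff.2 fun j => ae_mem_Icc_of_map_eq (hUmeas j).aemeasurable (hUlaw j)
  have hcdf : ∀ᵐ ω ∂ℙ, ∀ m r : ℕ, r ≤ m →
      Tendsto (fun N => empiricalCDF (U · ω) N (r / m)) atTop (𝓝 (r / m)) := by
    refine ae_all_iff.2 fun m => ae_all_iff.2 fun r => ?_
    filter_upwards [ae_tendsto_empiricalCDF (hUmeas 1) (fun i j hij => hUiid.indepFun hij)
      hident (r / m)] with ω hω hrm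
    rwa [measureReal_preimage_Iic_of_map_eq (hUmeas 1) (hUlaw 1) (by positivity)
      (div_le_one_of_le₀ (by exact_mod_cast hrm) (by positivity))] at hω
  filter_upwards [hunit, hcdf] with ω hunit hcdf
  have hV : ∀ N i, 1 ≤ i → i ≤ N → Uord N i ω ∈ Set.Icc 0 1 := fun N i hi hiN => by
    obtain ⟨σ, -, hσ⟩ := hperm N ω
    exact hσ i ⟨hi, hiN⟩ ▸ hunit _
  have h := tendsto_average_prod_shift_mul (f := fun j x => (θL + (θR - θL) * x) ^ p j)
    (fun j => by fun_prop) hφ.continuous k hV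
    fun ε hε => eventually_abs_orderStat_sub_div_le (hmono · ω) hV (hperm · ω) hcdf hε
  simpa only [prod_pow_eq_pow_sum] using h

/-- Strong law of large numbers for shifted monomials of order
statistics: for a monomial `h(x_1,...,x_k) = x_1^{p_1}⋯x_k^{p_k}` and `φ`
differentiable with bounded derivative,
`(1/N) Σ_{i=0}^{N-k} Θ_{i+1,N}^{p_1}⋯Θ_{i+k,N}^{p_k} φ(i/N)
  → ∫_0^1 ρ(x)^{p_1+⋯+p_k} φ(x) dx` almost surely,
where `Θ_{i,N} = θ_L + (θ_R-θ_L)U_{i:N}` and `ρ(x) = θ_L + (θ_R-θ_L)x`. -/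
theorem slln_local_monomials_order_statistics
    {Ω : Type*} [MeasureSpace Ω] [IsProbabilityMeasure (ℙ : Measure Ω)]
    (θL θR : ℝ) (hθL : 0 ≤ θL) (hθ : θL < θR)
    (U : ℕ → Ω → ℝ)
    (hUmeas : ∀ i, Measurable (U i))
    (hUiid : iIndepFun U ℙ)
    (hUlaw : ∀ i, Measure.map (U i) ℙ = volume.restrict (Set.Icc (0:ℝ) 1))
    (Uord : ℕ → ℕ → Ω → ℝ)
    (hOmeas : ∀ N i, Measurable (Uord N i))
    (hmono : ∀ N ω ⦃i j : ℕ⦄, 1 ≤ i → i ≤ j → j ≤ N → Uord N i ω ≤ Uord N j ω)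
    (hperm : ∀ N ω, ∃ σ : ℕ → ℕ, Set.BijOn σ (Set.Icc 1 N) (Set.Icc 1 N) ∧
      ∀ i ∈ Set.Icc 1 N, Uord N i ω = U (σ i) ω)
    (k : ℕ) (hk : 1 ≤ k) (p : ℕ → ℕ)
    (φ : ℝ → ℝ) (hφ : Differentiable ℝ φ) (hφ' : ∃ M, ∀ y, |deriv φ y| ≤ M) :
    ∀ᵐ ω ∂ℙ, Tendsto
      (fun N : ℕ =>
        (1 / (N : ℝ)) * ∑ i ∈ Finset.range (N - k + 1),
          (∏ j ∈ Finset.range k, (θL + (θR - θL) * Uord N (i + j + 1) ω) ^ (p j)) *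
            φ ((i : ℝ) / N))
      atTop
      (nhds (∫ x in (0:ℝ)..1,
        (θL + (θR - θL) * x) ^ (∑ j ∈ Finset.range k, p j) * φ x)) :=
  slln_local_monomials_order_statistics_general θL θR U hUmeas hUiid hUlaw Uord hmono hperm k p φ hφ
end

section
/- Local equilibrium for moments: in the mixed product state μ_N, for fixed x ∈ (0,1), k ∈ ℕ, and nonnegative integers p_1,...,p_k, the joint moment E[∏_{j=1}^k η_{⌊xN⌋+j,N}^{p_j}] converges as N → ∞ to ∏_{j=1}^k (Σ_{l≥0} l^{p_j} (1/(1+ρ(x)))(ρ(x)/(1+ρ(x)))^l), i.e., the product of moments of a geometric distribution with mean ρ(x) = θ_L + (θ_R-θ_L)x. -/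
/-!
Conditioning on the order statistics turns the joint moment into
`E[∏ⱼ geomMoment(Θ_{⌊xN⌋+j+1,N}) (p j)]`. By the strong law of large numbers applied to the
indicators `1{U_m ≤ q}`, almost surely the empirical distribution function of `U_1, …, U_N`
converges to `q` at every rational `q ∈ (0,1)`, and this pins the order statistic `U_{(i_N):N}`
to `x` whenever `i_N / N → x`. Hence the parameters `Θ_{⌊xN⌋+j+1,N}` converge almost surely to
`ρ(x)`, and since `geomMoment` is continuous and bounded on `[0, θ_R]`, dominated convergence
gives the limit.
-/

open MeasureTheory ProbabilityTheory Finset Filter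

/-- The `p`-th moment of the geometric distribution with mean `θ`:
`Σ_{l≥0} l^p (1/(1+θ))(θ/(1+θ))^l`. -/
noncomputable def geomMoment (θ : ℝ) (p : ℕ) : ℝ :=
  ∑' l : ℕ, (l : ℝ) ^ p * ((1 / (1 + θ)) * (θ / (1 + θ)) ^ l)

open Topology

section GeomMoment

variable {θ b : ℝ} (p : ℕ)

lemma summable_pow_mul_div_one_add_pow (hb : 0 ≤ b) :
    Summable fun l : ℕ => (l : ℝ) ^ p * (b / (1 + b)) ^ l :=
  summable_pow_mul_geometric_of_norm_lt_one p <| by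
    rw [Real.norm_of_nonneg (by positivity), div_lt_one (by positivity)]
    linarith

lemma geomMoment_term_nonneg (hθ : 0 ≤ θ) (l : ℕ) :
    0 ≤ (l : ℝ) ^ p * ((1 / (1 + θ)) * (θ / (1 + θ)) ^ l) := by
  positivity

lemma geomMoment_term_le (hθ : θ ∈ Set.Icc 0 b) (l : ℕ) :
    (l : ℝ) ^ p * ((1 / (1 + θ)) * (θ / (1 + θ)) ^ l) ≤ (l : ℝ) ^ p * (b / (1 + b)) ^ l := by
  obtain ⟨h0, hθb⟩ := hθ
  have hratio : θ / (1 + θ) ≤ b / (1 + b) := by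
    rw [div_le_div_iff₀ (by positivity) (by linarith)]
    linarith
  have hfactor : 1 / (1 + θ) ≤ 1 := by rw [div_le_one (by positivity)]; linarith
  gcongr
  exact (mul_le_of_le_one_left (by positivity) hfactor).trans (by gcongr)

lemma geomMoment_nonneg (hθ : 0 ≤ θ) : 0 ≤ geomMoment θ p :=
  tsum_nonneg (geomMoment_term_nonneg p hθ)

lemma geomMoment_le (hθ : θ ∈ Set.Icc 0 b) :
    geomMoment θ p ≤ ∑' l : ℕ, (l : ℝ) ^ p * (b / (1 + b)) ^ l :=
  Summable.tsum_le_tsum (geomMoment_term_le p hθ)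
    ((summable_pow_mul_div_one_add_pow p (hθ.1.trans hθ.2)).of_nonneg_of_le
      (geomMoment_term_nonneg p hθ.1) (geomMoment_term_le p hθ))
    (summable_pow_mul_div_one_add_pow p (hθ.1.trans hθ.2))

lemma continuousOn_geomMoment (hb : 0 ≤ b) : ContinuousOn (geomMoment · p) (Set.Icc 0 b) := by
  refine continuousOn_tsum (fun l => ?_) (summable_pow_mul_div_one_add_pow p hb) fun l θ hθ => ?_
  · have hden : ∀ θ ∈ Set.Icc 0 b, 1 + θ ≠ 0 := fun θ hθ => by linarith [hθ.1]
    exact continuousOn_const.mul ((continuousOn_const.div (by fun_prop) hden).mul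
      ((continuousOn_id.div (by fun_prop) hden).pow l))
  · rw [Real.norm_of_nonneg (geomMoment_term_nonneg p hθ.1 l)]
    exact geomMoment_term_le p hθ l

end GeomMoment

noncomputable def empiricalCount (u : ℕ → ℝ) (N : ℕ) (t : ℝ) : ℕ := #{m ∈ Icc 1 N | u m ≤ t}

section OrderStatistics

variable {u v : ℕ → ℝ} {N : ℕ}

lemma empiricalCount_eq_of_bijOn {σ : ℕ → ℕ} (hσ : Set.BijOn σ (Set.Icc 1 N) (Set.Icc 1 N))
    (hvu : ∀ i ∈ Set.Icc 1 N, v i = u (σ i)) (t : ℝ) :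
    empiricalCount v N t = empiricalCount u N t := by
  simp only [empiricalCount, card_filter]
  refine sum_nbij σ (fun i hi => ?_) (by simpa using hσ.injOn) (by simpa using hσ.surjOn)
    fun i hi => by rw [hvu i (by simpa using hi)]
  simpa using hσ.mapsTo (by simpa using hi)

lemma le_iff_le_empiricalCount_of_monotoneOn (hv : MonotoneOn v (Set.Icc 1 N)) {i : ℕ}
    (hi : i ∈ Set.Icc 1 N) (t : ℝ) : v i ≤ t ↔ i ≤ empiricalCount v N t := by
  constructor
  · intro hvi
    calc i = #(Icc 1 i) := by simp
      _ ≤ empiricalCount v N t := card_le_card fun j hj => by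
        simp only [mem_Icc] at hj
        simp only [mem_filter, mem_Icc]
        exact ⟨⟨hj.1, hj.2.trans hi.2⟩, (hv ⟨hj.1, hj.2.trans hi.2⟩ hi hj.2).trans hvi⟩
  · intro hcount
    by_contra! hvi
    have hsub : {m ∈ Icc 1 N | v m ≤ t} ⊆ Icc 1 (i - 1) := fun j hj => by
      simp only [mem_filter, mem_Icc] at hj ⊢
      by_contra! hij
      exact (hvi.trans_le (hv hi ⟨hj.1.1, hj.1.2⟩ (by omega))).not_ge hj.2
    have hcard := card_le_card hsub
    rw [Nat.card_Icc] at hcard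
    have hi1 := hi.1
    unfold empiricalCount at hcount
    omega

end OrderStatistics

section Quantiles

variable {u : ℕ → ℝ} {v : ℕ → ℕ → ℝ} {i : ℕ → ℕ} {x : ℝ}

lemma tendsto_floor_mul_add_div (hx : 0 ≤ x) (c : ℕ) :
    Tendsto (fun N : ℕ => ((⌊x * N⌋₊ + c : ℕ) : ℝ) / N) atTop (𝓝 x) := by
  have hfloor := (tendsto_nat_floor_mul_div_atTop hx).comp tendsto_natCast_atTop_atTop
  simpa [add_div] using hfloor.add (tendsto_const_div_atTop_nhds_zero_nat (c : ℝ))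

lemma eventually_mem_Icc_of_tendsto_div (hi : Tendsto (fun N : ℕ => (i N : ℝ) / N) atTop (𝓝 x))
    (hx : x ∈ Set.Ioo 0 1) : ∀ᶠ N in atTop, i N ∈ Set.Icc 1 N := by
  filter_upwards [hi.eventually (lt_mem_nhds hx.1), hi.eventually (gt_mem_nhds hx.2)]
    with N hpos hlt1
  have hN : (0 : ℝ) < N := by
    rcases div_pos_iff.1 hpos with h | h
    · exact h.2
    · exact absurd h.1 (Nat.cast_nonneg _).not_gt
  have hiN := (div_lt_one hN).1 hlt1
  exact ⟨Nat.one_le_iff_ne_zero.2 fun h => by simp [h] at hpos, by exact_mod_cast hiN.le⟩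

lemma tendsto_orderStat_of_tendsto_empiricalCount
    (hv : ∀ N, ∀ n ∈ Set.Icc 1 N, ∀ t, v N n ≤ t ↔ n ≤ empiricalCount u N t)
    (hF : ∀ q : ℚ, (q : ℝ) ∈ Set.Ioo 0 1 →
      Tendsto (fun N : ℕ => (empiricalCount u N q : ℝ) / N) atTop (𝓝 q))
    (hi : Tendsto (fun N : ℕ => (i N : ℝ) / N) atTop (𝓝 x)) (hx : x ∈ Set.Ioo 0 1) :
    Tendsto (fun N => v N (i N)) atTop (𝓝 x) := by
  have hrange := eventually_mem_Icc_of_tendsto_div hi hx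
  have div_lt {N a b : ℕ} (hN : 1 ≤ N) (h : (a : ℝ) / N < (b : ℝ) / N) : a < b := by
    have : (0 : ℝ) < N := by exact_mod_cast hN
    exact_mod_cast (div_lt_div_iff_of_pos_right this).1 h
  refine tendsto_order.2 ⟨fun a ha => ?_, fun b hb => ?_⟩
  · obtain ⟨q, hmax, hqx⟩ := exists_rat_btwn (max_lt ha hx.1)
    have hq : (q : ℝ) ∈ Set.Ioo 0 1 := ⟨(le_max_right a 0).trans_lt hmax, hqx.trans hx.2⟩
    filter_upwards [hrange, ((hF q hq).sub hi).eventually (gt_mem_nhds (sub_neg.2 hqx))]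
      with N hN hcount
    have hlt : empiricalCount u N q < i N := div_lt (hN.1.trans hN.2) (sub_neg.1 hcount)
    exact ((le_max_left a 0).trans_lt hmax).trans (not_le.1 fun h => hlt.not_ge ((hv N _ hN q).1 h))
  · obtain ⟨q, hxq, hmin⟩ := exists_rat_btwn (lt_min hb hx.2)
    have hq : (q : ℝ) ∈ Set.Ioo 0 1 := ⟨hx.1.trans hxq, hmin.trans_le (min_le_right b 1)⟩
    filter_upwards [hrange, (hi.sub (hF q hq)).eventually (gt_mem_nhds (sub_neg.2 hxq))]
      with N hN hcount
    have hle : i N ≤ empiricalCount u N q := (div_lt (hN.1.trans hN.2) (sub_neg.1 hcount)).le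
    exact ((hv N _ hN q).2 hle).trans_lt (hmin.trans_le (min_le_left b 1))

end Quantiles

section EmpiricalDistribution

variable {Ω : Type*} {mΩ : MeasurableSpace Ω} {μ : Measure Ω} [IsProbabilityMeasure μ]

lemma tendsto_empiricalCount_div_ae {U : ℕ → Ω → ℝ} {ν : Measure ℝ} (hU : ∀ i, Measurable (U i))
    (hind : iIndepFun U μ) (hlaw : ∀ i, μ.map (U i) = ν) (t : ℝ) :
    ∀ᵐ ω ∂μ, Tendsto (fun N : ℕ => (empiricalCount (U · ω) N t : ℝ) / N) atTop
      (𝓝 (ν.real (Set.Iic t))) := by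
  set g : ℝ → ℝ := (Set.Iic t).indicator 1
  have hg : Measurable g := measurable_const.indicator measurableSet_Iic
  set X : ℕ → Ω → ℝ := fun i => g ∘ U (i + 1)
  have hint : Integrable (X 0) μ := by
    exact (integrable_const (1 : ℝ)).indicator (hU 1 measurableSet_Iic)
  have hindep : Pairwise fun i j => X i ⟂ᵢ[μ] X j := fun i j hij =>
    (hind.indepFun (by omega : i + 1 ≠ j + 1)).comp hg hg
  have hident : ∀ i, IdentDistrib (X i) (X 0) μ μ := fun i =>
    (IdentDistrib.mk (hU _).aemeasurable (hU _).aemeasurable (by rw [hlaw, hlaw])).comp hg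
  have hmean : μ[X 0] = ν.real (Set.Iic t) := by
    rw [← hlaw 1, map_measureReal_apply (hU 1) measurableSet_Iic,
      ← integral_indicator_one (hU 1 measurableSet_Iic)]
    rfl
  have hsum : ∀ ω N, ∑ i ∈ range N, X i ω = empiricalCount (U · ω) N t := by
    intro ω N
    change ∑ i ∈ range N, g (U (i + 1) ω) = _
    rw [empiricalCount, natCast_card_filter, range_eq_Ico, sum_Ico_add' (fun m => g (U m ω)) 0 N 1]
    simp [g, Set.indicator_apply, Finset.Ico_add_one_right_eq_Icc]
  filter_upwards [strong_law_ae X hint hindep hident] with ω hω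
  simpa [hsum, hmean, div_eq_inv_mul] using hω

lemma uniform_real_Iic {t : ℝ} (ht : t ∈ Set.Icc 0 1) :
    (volume.restrict (Set.Icc (0 : ℝ) 1)).real (Set.Iic t) = t := by
  have hset : Set.Iic t ∩ Set.Icc 0 1 = Set.Icc 0 t := by
    ext s
    simp only [Set.mem_inter_iff, Set.mem_Iic, Set.mem_Icc]
    constructor
    · rintro ⟨hst, hs0, -⟩; exact ⟨hs0, hst⟩
    · rintro ⟨hs0, hst⟩; exact ⟨hst, hs0, hst.trans ht.2⟩
  rw [measureReal_restrict_apply measurableSet_Iic, hset, Real.volume_real_Icc_of_le ht.1, sub_zero]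

end EmpiricalDistribution

section OrderStatisticsOfUniforms

variable {Ω : Type*} {mΩ : MeasurableSpace Ω} {μ : Measure Ω}
  {U : ℕ → Ω → ℝ} {Uord : ℕ → ℕ → Ω → ℝ}

lemma ae_orderStat_mem_Icc (hU : ∀ i, Measurable (U i))
    (hlaw : ∀ i, μ.map (U i) = volume.restrict (Set.Icc (0 : ℝ) 1))
    (hperm : ∀ N ω, ∃ σ : ℕ → ℕ, Set.BijOn σ (Set.Icc 1 N) (Set.Icc 1 N) ∧
      ∀ i ∈ Set.Icc 1 N, Uord N i ω = U (σ i) ω) :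
    ∀ᵐ ω ∂μ, ∀ N, ∀ i ∈ Set.Icc 1 N, Uord N i ω ∈ Set.Icc 0 1 := by
  have hmem : ∀ᵐ ω ∂μ, ∀ m, U m ω ∈ Set.Icc 0 1 := ae_all_iff.2 fun m =>
    ae_of_ae_map (hU m).aemeasurable (by rw [hlaw m]; exact ae_restrict_mem measurableSet_Icc)
  filter_upwards [hmem] with ω hω N i hi
  obtain ⟨σ, -, hσ⟩ := hperm N ω
  exact hσ i hi ▸ hω (σ i)

lemma ae_tendsto_orderStat [IsProbabilityMeasure μ] (hU : ∀ i, Measurable (U i))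
    (hind : iIndepFun U μ)
    (hlaw : ∀ i, μ.map (U i) = volume.restrict (Set.Icc (0 : ℝ) 1))
    (hmono : ∀ N ω ⦃i j : ℕ⦄, 1 ≤ i → i ≤ j → j ≤ N → Uord N i ω ≤ Uord N j ω)
    (hperm : ∀ N ω, ∃ σ : ℕ → ℕ, Set.BijOn σ (Set.Icc 1 N) (Set.Icc 1 N) ∧
      ∀ i ∈ Set.Icc 1 N, Uord N i ω = U (σ i) ω)
    {x : ℝ} (hx : x ∈ Set.Ioo 0 1) :
    ∀ᵐ ω ∂μ, ∀ i : ℕ → ℕ, Tendsto (fun N : ℕ => (i N : ℝ) / N) atTop (𝓝 x) →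
      Tendsto (fun N => Uord N (i N) ω) atTop (𝓝 x) := by
  filter_upwards [ae_all_iff.2 fun q : ℚ => tendsto_empiricalCount_div_ae hU hind hlaw q]
    with ω hω i hi
  refine tendsto_orderStat_of_tendsto_empiricalCount (u := (U · ω)) (v := (Uord · · ω))
    (fun N n hn t => ?_) (fun q hq => ?_) hi hx
  · obtain ⟨σ, hσ, hvu⟩ := hperm N ω
    rw [le_iff_le_empiricalCount_of_monotoneOn (fun a ha b hb hab => hmono N ω ha.1 hab hb.2) hn,
      empiricalCount_eq_of_bijOn (u := (U · ω)) hσ hvu]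
  · simpa only [uniform_real_Iic (Set.Ioo_subset_Icc_self hq)] using hω q

end OrderStatisticsOfUniforms

lemma tendsto_integral_prod_geomMoment {Ω : Type*} {mΩ : MeasurableSpace Ω} {μ : Measure Ω}
    [IsProbabilityMeasure μ] {Θ : ℕ → ℕ → Ω → ℝ} {ρ b : ℝ} {k : ℕ} {p : ℕ → ℕ}
    (hmeas : ∀ N, AEStronglyMeasurable (fun ω => ∏ j ∈ range k, geomMoment (Θ N j ω) (p j)) μ)
    (hmem : ∀ᶠ N in atTop, ∀ᵐ ω ∂μ, ∀ j ∈ range k, Θ N j ω ∈ Set.Icc 0 b)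
    (hlim : ∀ᵐ ω ∂μ, ∀ j ∈ range k, Tendsto (fun N => Θ N j ω) atTop (𝓝 ρ))
    (hρ : ρ ∈ Set.Ioo 0 b) :
    Tendsto (fun N => ∫ ω, ∏ j ∈ range k, geomMoment (Θ N j ω) (p j) ∂μ) atTop
      (𝓝 (∏ j ∈ range k, geomMoment ρ (p j))) := by
  have hb : 0 ≤ b := hρ.1.le.trans hρ.2.le
  have hbound : ∀ᶠ N in atTop, ∀ᵐ ω ∂μ, ‖∏ j ∈ range k, geomMoment (Θ N j ω) (p j)‖ ≤
      ∏ j ∈ range k, ∑' l : ℕ, (l : ℝ) ^ p j * (b / (1 + b)) ^ l := by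
    filter_upwards [hmem] with N hN
    filter_upwards [hN] with ω hω
    rw [Real.norm_of_nonneg (prod_nonneg fun j hj => geomMoment_nonneg _ (hω j hj).1)]
    exact prod_le_prod (fun j hj => geomMoment_nonneg _ (hω j hj).1)
      fun j hj => geomMoment_le _ (hω j hj)
  have hpointwise : ∀ᵐ ω ∂μ, Tendsto (fun N => ∏ j ∈ range k, geomMoment (Θ N j ω) (p j)) atTop
      (𝓝 (∏ j ∈ range k, geomMoment ρ (p j))) := by
    filter_upwards [hlim] with ω hω
    refine tendsto_finsetProd _ fun j hj => ?_
    exact ((continuousOn_geomMoment (p j) hb).continuousAt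
      (Icc_mem_nhds hρ.1 hρ.2)).tendsto.comp (hω j hj)
  simpa using tendsto_integral_filter_of_dominated_convergence _ (Eventually.of_forall hmeas)
    hbound (integrable_const _) hpointwise

theorem local_equilibrium_moments_general
    {Ω : Type*} [MeasureSpace Ω] [IsProbabilityMeasure (ℙ : Measure Ω)]
    (θL θR : ℝ) (hθL : 0 ≤ θL) (hθ : θL < θR)
    (U : ℕ → Ω → ℝ)
    (hUmeas : ∀ i, Measurable (U i))
    (hUiid : iIndepFun U ℙ)
    (hUlaw : ∀ i, Measure.map (U i) ℙ = volume.restrict (Set.Icc (0:ℝ) 1))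
    (Uord : ℕ → ℕ → Ω → ℝ)
    (hOmeas : ∀ N i, Measurable (Uord N i))
    (hmono : ∀ N ω ⦃i j : ℕ⦄, 1 ≤ i → i ≤ j → j ≤ N → Uord N i ω ≤ Uord N j ω)
    (hperm : ∀ N ω, ∃ σ : ℕ → ℕ, Set.BijOn σ (Set.Icc 1 N) (Set.Icc 1 N) ∧
      ∀ i ∈ Set.Icc 1 N, Uord N i ω = U (σ i) ω)
    (η : ℕ → ℕ → Ω → ℕ)
    -- conditionally on the random parameters, the coordinates are independent
    -- geometrics: conditional joint moments factorize through `geomMoment`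
    (hcond : ∀ (N m : ℕ) (s q : ℕ → ℕ), Function.Injective s →
      (ℙ[(fun ω => ∏ j ∈ Finset.range m, ((η N (s j) ω : ℝ)) ^ (q j)) |
          MeasurableSpace.comap (fun ω (i : ℕ) => Uord N i ω) MeasurableSpace.pi])
        =ᵐ[ℙ] fun ω => ∏ j ∈ Finset.range m,
          geomMoment (θL + (θR - θL) * Uord N (s j) ω) (q j))
    (x : ℝ) (hx : x ∈ Set.Ioo (0:ℝ) 1) (k : ℕ) (p : ℕ → ℕ) :
    Tendsto
      (fun N : ℕ =>
        ∫ ω, ∏ j ∈ Finset.range k, ((η N (Nat.floor (x * N) + j + 1) ω : ℝ)) ^ (p j) ∂ℙ)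
      atTop
      (nhds (∏ j ∈ Finset.range k,
        ∑' l : ℕ, (l : ℝ) ^ (p j) *
          ((1 / (1 + (θL + (θR - θL) * x))) *
            ((θL + (θR - θL) * x) / (1 + (θL + (θR - θL) * x))) ^ l))) := by
  have hσalg (N : ℕ) : MeasurableSpace.comap (fun ω (i : ℕ) => Uord N i ω) MeasurableSpace.pi ≤
      MeasureSpace.toMeasurableSpace :=
    (measurable_pi_lambda _ (hOmeas N)).comap_le
  have hinj (N : ℕ) : Function.Injective fun j => ⌊x * N⌋₊ + j + 1 := fun a b h => by simpa using h
  have hcondInt N := (integral_condExp (hσalg N)).symm.trans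
    (integral_congr_ae (hcond N k (fun j => ⌊x * N⌋₊ + j + 1) p (hinj N)))
  simp only [hcondInt]
  -- measurability comes from `hcond`: the integrand is a.e. equal to a conditional expectation
  refine tendsto_integral_prod_geomMoment (b := θR)
    (fun N => (stronglyMeasurable_condExp.mono (hσalg N)).aestronglyMeasurable.congr
      (hcond N k _ p (hinj N))) ?_ ?_ ⟨by nlinarith [hx.1], by nlinarith [hx.2]⟩
  · filter_upwards [eventually_mem_Icc_of_tendsto_div (tendsto_floor_mul_add_div hx.1.le k) hx]
      with N hN
    filter_upwards [ae_orderStat_mem_Icc hUmeas hUlaw hperm] with ω hω j hj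
    have hjN : ⌊x * N⌋₊ + j + 1 ≤ N := by have := hN.2; have := mem_range.1 hj; omega
    obtain ⟨h0, h1⟩ := hω N (⌊x * N⌋₊ + j + 1) ⟨by omega, hjN⟩
    exact ⟨by nlinarith, by nlinarith⟩
  · filter_upwards [ae_tendsto_orderStat hUmeas hUiid hUlaw hmono hperm hx] with ω hω j _
    exact tendsto_const_nhds.add ((hω _ (tendsto_floor_mul_add_div hx.1.le (j + 1))).const_mul _)

/-- Local equilibrium for moments.  In the mixed product state `μ_N`
(geometric coordinates `η_{i,N}` which, conditionally on the order-statistics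
parameters `Θ_{i,N} = θ_L + (θ_R-θ_L)U_{i:N}`, are independent geometrics with
means `Θ_{i,N}`), for fixed `x ∈ (0,1)` and nonnegative integers `p_1,...,p_k`,
`E[∏_{j=1}^k η_{⌊xN⌋+j,N}^{p_j}] → ∏_{j=1}^k Σ_{l≥0} l^{p_j} (1/(1+ρ(x)))(ρ(x)/(1+ρ(x)))^l`
as `N → ∞`, where `ρ(x) = θ_L + (θ_R-θ_L)x`. -/
theorem local_equilibrium_moments
    {Ω : Type*} [MeasureSpace Ω] [IsProbabilityMeasure (ℙ : Measure Ω)]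
    (θL θR : ℝ) (hθL : 0 ≤ θL) (hθ : θL < θR)
    (U : ℕ → Ω → ℝ)
    (hUmeas : ∀ i, Measurable (U i))
    (hUiid : iIndepFun U ℙ)
    (hUlaw : ∀ i, Measure.map (U i) ℙ = volume.restrict (Set.Icc (0:ℝ) 1))
    (Uord : ℕ → ℕ → Ω → ℝ)
    (hOmeas : ∀ N i, Measurable (Uord N i))
    (hmono : ∀ N ω ⦃i j : ℕ⦄, 1 ≤ i → i ≤ j → j ≤ N → Uord N i ω ≤ Uord N j ω)
    (hperm : ∀ N ω, ∃ σ : ℕ → ℕ, Set.BijOn σ (Set.Icc 1 N) (Set.Icc 1 N) ∧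
      ∀ i ∈ Set.Icc 1 N, Uord N i ω = U (σ i) ω)
    (η : ℕ → ℕ → Ω → ℕ)
    (hηmeas : ∀ N i, Measurable (η N i))
    -- conditionally on the random parameters, the coordinates are independent
    -- geometrics: conditional joint moments factorize through `geomMoment`
    (hcond : ∀ (N m : ℕ) (s q : ℕ → ℕ), Function.Injective s →
      (ℙ[(fun ω => ∏ j ∈ Finset.range m, ((η N (s j) ω : ℝ)) ^ (q j)) |
          MeasurableSpace.comap (fun ω (i : ℕ) => Uord N i ω) MeasurableSpace.pi])
        =ᵐ[ℙ] fun ω => ∏ j ∈ Finset.range m,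
          geomMoment (θL + (θR - θL) * Uord N (s j) ω) (q j))
    (x : ℝ) (hx : x ∈ Set.Ioo (0:ℝ) 1) (k : ℕ) (p : ℕ → ℕ) :
    Tendsto
      (fun N : ℕ =>
        ∫ ω, ∏ j ∈ Finset.range k, ((η N (Nat.floor (x * N) + j + 1) ω : ℝ)) ^ (p j) ∂ℙ)
      atTop
      (nhds (∏ j ∈ Finset.range k,
        ∑' l : ℕ, (l : ℝ) ^ (p j) *
          ((1 / (1 + (θL + (θR - θL) * x))) *
            ((θL + (θR - θL) * x) / (1 + (θL + (θR - θL) * x))) ^ l))) :=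
  local_equilibrium_moments_general θL θR hθL hθ U hUmeas hUiid hUlaw Uord hOmeas hmono hperm η
    hcond x hx k p
end
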